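/- arXiv:2111.06542 — 2 statements merged into one kernel-verified Lean document; each statement's English description precedes it below -/
import Mathlib

section
/- Let n = p·q·l with gcd(p, q) = 1, and suppose λ, μ ∈ ℤ/nℤ have orders p and q respectively. Then there exists a generator τ of ℤ/nℤ (i.e., an integer τ coprime to n) such that λ = τ·q·l and μ = τ·p·l in ℤ/nℤ. -/
/-!
Every element of `ZMod n` is a unit times a divisor of `n`, and multiplication by a unit
preserves additive order; hence `λ = u * (q * l)` and `μ = v * (p * l)` for units `u`, `v`.
These products only depend on `u` mod `p` and `v` mod `q`, and by the Chinese remainder theorem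
and the surjectivity of `(ZMod n)ˣ → (ZMod (p * q))ˣ` one unit `τ` of `ZMod n` has both residues.
-/

namespace ZMod

theorem exists_isUnit_mul_of_addOrderOf_eq {n p m : ℕ} [NeZero n] (hn : n = p * m)
    {x : ZMod n} (hx : addOrderOf x = p) : ∃ u : ZMod n, IsUnit u ∧ x = u * m := by
  obtain ⟨d, hdn, u, hu, rfl⟩ := eq_unit_mul_divisor x
  have hmul : addOrderOf (u * d) = addOrderOf (d : ZMod n) :=
    addOrderOf_injective (AddMonoidHom.mulLeft u) hu.mul_right_injective _
  rw [hmul, addOrderOf_coe _ (NeZero.ne n), Nat.gcd_eq_right hdn] at hx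
  have hp : 0 < p := Nat.pos_of_ne_zero (left_ne_zero_of_mul (hn ▸ NeZero.ne n))
  have hd : d = m := by
    apply Nat.eq_of_mul_eq_mul_left hp
    rw [← hn, ← hx, Nat.div_mul_cancel hdn]
  exact ⟨u, hu, by rw [hd]⟩

theorem mul_natCast_eq_of_cast_eq {n p m : ℕ} [NeZero n] (hn : n = p * m) {a b : ZMod n}
    (h : (cast a : ZMod p) = cast b) : a * m = b * m := by
  have hp : p ∣ n := hn ▸ dvd_mul_right p m
  rw [← natCast_zmod_val a, ← natCast_zmod_val b, cast_natCast hp, cast_natCast hp,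
    natCast_eq_natCast_iff] at h
  rw [← natCast_zmod_val a, ← natCast_zmod_val b, ← Nat.cast_mul, ← Nat.cast_mul,
    natCast_eq_natCast_iff]
  exact hn ▸ h.mul_right' m

theorem cast_cast_of_dvd {n m d : ℕ} (hm : n ∣ m) (hd : m ∣ d) (x : ZMod d) :
    (cast (cast x : ZMod m) : ZMod n) = cast x :=
  RingHom.congr_fun (castHom_comp hm hd) x

theorem exists_isUnit_cast_eq_and_cast_eq {n p q : ℕ} [NeZero n] (hpq : p.Coprime q)
    (hdvd : p * q ∣ n) {a : ZMod p} {b : ZMod q} (ha : IsUnit a) (hb : IsUnit b) :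
    ∃ w : ZMod n, IsUnit w ∧ (cast w : ZMod p) = a ∧ (cast w : ZMod q) = b := by
  set c := (chineseRemainder hpq).symm (a, b)
  have hc : IsUnit c := (Prod.isUnit_iff.mpr ⟨ha, hb⟩).map _
  have hcrt : chineseRemainder hpq c = (a, b) := (chineseRemainder hpq).apply_symm_apply (a, b)
  have hcp : (cast c : ZMod p) = a := (Prod.fst_zmod_cast c).symm.trans (congrArg Prod.fst hcrt)
  have hcq : (cast c : ZMod q) = b := (Prod.snd_zmod_cast c).symm.trans (congrArg Prod.snd hcrt)
  obtain ⟨w, hw⟩ := unitsMap_surjective hdvd hc.unit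
  have hwc : (cast (w : ZMod n) : ZMod (p * q)) = c := congrArg Units.val hw
  refine ⟨w, w.isUnit, ?_, ?_⟩
  · rw [← cast_cast_of_dvd (dvd_mul_right p q) hdvd, hwc, hcp]
  · rw [← cast_cast_of_dvd (dvd_mul_left q p) hdvd, hwc, hcq]

end ZMod

theorem stmt_3 (n p q l : ℕ) (hp : 0 < p) (hq : 0 < q) (hl : 0 < l)
    (hn : n = p * q * l) (hpq : Nat.gcd p q = 1)
    (lam mu : ZMod n) (hlam : addOrderOf lam = p) (hmu : addOrderOf mu = q) :
    ∃ τ : ℤ, Int.gcd τ n = 1 ∧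
      lam = ((τ * q * l : ℤ) : ZMod n) ∧ mu = ((τ * p * l : ℤ) : ZMod n) := by
  have : NeZero n := ⟨by rw [hn]; positivity⟩
  have hnp : n = p * (q * l) := by rw [hn, mul_assoc]
  have hnq : n = q * (p * l) := by rw [hn]; ring
  obtain ⟨u, hu, rfl⟩ := ZMod.exists_isUnit_mul_of_addOrderOf_eq hnp hlam
  obtain ⟨v, hv, rfl⟩ := ZMod.exists_isUnit_mul_of_addOrderOf_eq hnq hmu
  obtain ⟨w, hw, hwu, hwv⟩ := ZMod.exists_isUnit_cast_eq_and_cast_eq hpq ⟨l, hn⟩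
    (hu.map (ZMod.castHom (hnp ▸ dvd_mul_right p _) (ZMod p)))
    (hv.map (ZMod.castHom (hnq ▸ dvd_mul_right q _) (ZMod q)))
  refine ⟨w.val, ?_, ?_, ?_⟩
  · rw [Int.gcd_natCast_natCast]
    exact (ZMod.isUnit_iff_coprime _ n).mp (by rwa [ZMod.natCast_zmod_val])
  · push_cast
    rw [ZMod.natCast_zmod_val, mul_assoc]
    exact_mod_cast ZMod.mul_natCast_eq_of_cast_eq hnp hwu.symm
  · push_cast
    rw [ZMod.natCast_zmod_val, mul_assoc]
    exact_mod_cast ZMod.mul_natCast_eq_of_cast_eq hnq hwv.symm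
end

section
/- Let p, q be coprime positive integers with p odd, let l be a positive integer divisible by 4, set n = p·q·l, and let m₀ be a positive integer with gcd(m₀, p) = 1. Then there exists a positive integer k satisfying k ≡ q·m₀ (mod p), k ≡ p (mod 2q), and gcd(k, n) = 1. -/
/-!
By the Chinese remainder theorem the two congruences are solved by some `a` coprime to `2pq`.
Every unit modulo `2pq` lifts to a unit modulo `2pq · n`, and a representative of such a lift
satisfies the same congruences and is coprime to `n`.
-/

theorem Nat.exists_pos_modEq_coprime {a M n : ℕ} (ha : a.Coprime M) (hM : 1 < M) (hn : n ≠ 0) :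
    ∃ k, 0 < k ∧ k ≡ a [MOD M] ∧ k.Coprime n := by
  have : NeZero (M * n) := ⟨by positivity⟩
  have : Fact (1 < M * n) := ⟨by nlinarith [Nat.pos_of_ne_zero hn]⟩
  obtain ⟨u, hu⟩ := ZMod.unitsMap_surjective (dvd_mul_right M n) (ZMod.unitOfCoprime a ha)
  refine ⟨(u : ZMod (M * n)).val, ZMod.val_pos.2 u.ne_zero, ?_,
    (ZMod.val_coe_unit_coprime u).coprime_dvd_right (dvd_mul_left n M)⟩
  rw [← ZMod.natCast_eq_natCast_iff, ZMod.natCast_val,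
    ← ZMod.unitsMap_val (dvd_mul_right M n), hu, ZMod.coe_unitOfCoprime]

theorem stmt_10_general (p q l : ℕ) (hp : 0 < p) (hq : 0 < q) (hpq : Nat.gcd p q = 1)
    (hpodd : Odd p) (hl : 0 < l) (n : ℕ) (hn : n = p * q * l)
    (m₀ : ℕ) (hm₀p : Nat.gcd m₀ p = 1) :
    ∃ k : ℕ, 0 < k ∧ k ≡ q * m₀ [MOD p] ∧ k ≡ p [MOD 2 * q] ∧ Nat.gcd k n = 1 := by
  have hp2q : p.Coprime (2 * q) := (Nat.coprime_two_right.2 hpodd).mul_right hpq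
  obtain ⟨a, hap, ha2q⟩ := Nat.chineseRemainder hp2q (q * m₀) p
  have ha : a.Coprime (p * (2 * q)) := by
    refine Nat.Coprime.mul_right ?_ ?_
    · rw [Nat.Coprime, hap.gcd_eq]
      exact (Nat.coprime_comm.1 hpq).mul_left hm₀p
    · rw [Nat.Coprime, ha2q.gcd_eq]
      exact hp2q
  obtain ⟨k, hk, hka, hkn⟩ :=
    Nat.exists_pos_modEq_coprime (n := n) ha (by nlinarith) (by subst hn; positivity)
  exact ⟨k, hk, (Nat.ModEq.of_mul_right _ hka).trans hap,
    (Nat.ModEq.of_mul_left _ hka).trans ha2q, hkn⟩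

theorem stmt_10 (p q l : ℕ) (hp : 0 < p) (hq : 0 < q) (hpq : Nat.gcd p q = 1)
    (hpodd : Odd p) (hl : 0 < l) (h4 : 4 ∣ l) (n : ℕ) (hn : n = p * q * l)
    (m₀ : ℕ) (hm₀ : 0 < m₀) (hm₀p : Nat.gcd m₀ p = 1) :
    ∃ k : ℕ, 0 < k ∧ k ≡ q * m₀ [MOD p] ∧ k ≡ p [MOD 2 * q] ∧ Nat.gcd k n = 1 :=
  stmt_10_general p q l hp hq hpq hpodd hl n hn m₀ hm₀p
end
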